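/- If S and T are ordered rooted binary trees sharing a common edge, then d_R(S,T) = d_R(S1,T1) + d_R(S2,T2), where (S1,T1) and (S2,T2) are the tree pairs obtained by splitting S and T at the common edge (replacing the subtree below the edge by a placeholder leaf to form the upper trees S1,T1, and taking the subtrees below the edge as S2,T2). -/

import Mathlib

/-!
Grafting commutes with rotations, so an optimal sequence for the upper trees followed by one
for the lower trees turns `graft S1 i S2` into `graft T1 i T2`.

Conversely, restrict every tree of an optimal sequence between the grafted trees to the leaves
below the common edge, and to the other leaves together with the first leaf below the edge (which
plays the placeholder); at the ends this gives back the lower and the upper trees. A rotation of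
`(a b) c` changes a restriction only if each of `a`, `b`, `c` meets the leaf set, and then it acts
on it as a rotation. It never changes both restrictions: if `a` and `c` meet the leaves below the
edge, all leaves of `b` lie strictly inside that interval, so `b` misses the other set. Hence the
two restricted sequences together are no longer than the original one.
-/

inductive BT : Type
  | leaf : BT
  | node : BT → BT → BT
deriving DecidableEq

namespace BT

/-- number of internal nodes -/
def size : BT → ℕ
  | leaf => 0
  | node l r => size l + size r + 1

/-- number of leaves -/
def nl (t : BT) : ℕ := size t + 1

/-- one (right) rotation somewhere in the tree -/
inductive Rot : BT → BT → Prop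
  | root (a b c : BT) : Rot (node (node a b) c) (node a (node b c))
  | congrL {l l' : BT} (r : BT) : Rot l l' → Rot (node l r) (node l' r)
  | congrR (l : BT) {r r' : BT} : Rot r r' → Rot (node l r) (node l r')

/-- a rotation move: a right rotation or its inverse (a left rotation) -/
def Move (s t : BT) : Prop := Rot s t ∨ Rot t s

/-- `Chain n s t`: `s` is transformed into `t` by `n` rotation moves -/
inductive Chain : ℕ → BT → BT → Prop
  | refl (t : BT) : Chain 0 t t
  | step {n : ℕ} {s u t : BT} : Move s u → Chain n u t → Chain (n + 1) s t

/-- rotation distance -/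
noncomputable def dR (s t : BT) : ℕ := sInf {n | Chain n s t}

def isNode : BT → Bool
  | leaf => false
  | node _ _ => true

/-- the multiset of leaf partitions induced by internal edges, where the leaves of the
tree are numbered from `k` on, left to right; each internal edge is recorded by the
set of leaf numbers below it. -/
def iparts : BT → ℕ → Multiset (Finset ℕ)
  | leaf, _ => 0
  | node l r, k =>
      ((if isNode l then {Finset.Ico k (k + nl l)} else 0) + iparts l k)
        + ((if isNode r then {Finset.Ico (k + nl l) (k + nl l + nl r)} else 0)
            + iparts r (k + nl l))

/-- number of common edge pairs -/
def commonEdges (s t : BT) : ℕ := ((iparts s 0) ∩ (iparts t 0)).card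

/-- replace the `i`-th leaf (numbered left to right from 0) of the first tree by the
second tree -/
def graft : BT → ℕ → BT → BT
  | leaf, 0, u => u
  | leaf, _ + 1, _ => leaf
  | node l r, i, u =>
      if i < l.nl then node (graft l i u) r else node l (graft r (i - l.nl) u)

@[simp] lemma nl_leaf : nl leaf = 1 := rfl

@[simp] lemma nl_node (l r : BT) : nl (node l r) = nl l + nl r := by
  simp only [nl, size]; omega

lemma nl_pos (t : BT) : 0 < nl t := Nat.succ_pos _

lemma Rot.size_eq {s t : BT} (h : Rot s t) : size s = size t := by
  induction h <;> simp only [size] <;> omega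

lemma Rot.nl_eq {s t : BT} (h : Rot s t) : nl s = nl t := by
  rw [nl, nl, h.size_eq]

lemma Move.symm {s t : BT} (h : Move s t) : Move t s := Or.symm h

lemma Move.map {f : BT → BT} (hf : ∀ {s t}, Rot s t → Rot (f s) (f t)) {s t : BT}
    (h : Move s t) : Move (f s) (f t) :=
  h.imp hf hf

namespace Chain

variable {m n : ℕ} {s t u : BT}

lemma single (h : Move s t) : Chain 1 s t := .step h (.refl t)

lemma trans (h₁ : Chain m s u) (h₂ : Chain n u t) : Chain (m + n) s t := by
  induction h₁ with
  | refl => simpa using h₂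
  | step hm _ ih => rw [Nat.add_right_comm]; exact .step hm (ih h₂)

lemma symm (h : Chain n s t) : Chain n t s := by
  induction h with
  | refl => exact .refl _
  | step hm _ ih => exact ih.trans (single hm.symm)

lemma map {f : BT → BT} (hf : ∀ {s t}, Rot s t → Rot (f s) (f t)) (h : Chain n s t) :
    Chain n (f s) (f t) := by
  induction h with
  | refl => exact .refl _
  | step hm _ ih => exact .step (hm.map hf) ih

end Chain

def comb : ℕ → BT
  | 0 => leaf
  | n + 1 => node leaf (comb n)

lemma exists_chain_node_comb (a b : ℕ) :
    ∃ n, Chain n (node (comb a) (comb b)) (comb (a + b + 1)) := by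
  induction a with
  | zero => exact ⟨0, by rw [zero_add]; exact .refl _⟩
  | succ a ih =>
    obtain ⟨n, h⟩ := ih
    refine ⟨n + 1, .step (.inl (.root leaf (comb a) (comb b))) ?_⟩
    rw [Nat.add_right_comm a 1 b]
    exact h.map (Rot.congrR leaf)

lemma exists_chain_comb (t : BT) : ∃ n, Chain n t (comb (size t)) := by
  induction t with
  | leaf => exact ⟨0, .refl _⟩
  | node l r ihl ihr =>
    obtain ⟨n₁, h₁⟩ := ihl
    obtain ⟨n₂, h₂⟩ := ihr
    obtain ⟨n₃, h₃⟩ := exists_chain_node_comb (size l) (size r)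
    exact ⟨_, ((h₁.map (Rot.congrL r)).trans (h₂.map (Rot.congrR _))).trans h₃⟩

lemma exists_chain_of_size_eq {s t : BT} (h : size s = size t) : ∃ n, Chain n s t := by
  obtain ⟨m, hs⟩ := exists_chain_comb s
  obtain ⟨n, ht⟩ := exists_chain_comb t
  exact ⟨m + n, hs.trans (h ▸ ht.symm)⟩

lemma dR_le {n : ℕ} {s t : BT} (h : Chain n s t) : dR s t ≤ n := Nat.sInf_le h

lemma chain_dR {s t : BT} (h : size s = size t) : Chain (dR s t) s t :=
  Nat.sInf_mem (exists_chain_of_size_eq h)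

lemma size_graft {t : BT} {i : ℕ} (u : BT) (hi : i < nl t) :
    size (graft t i u) = size t + size u := by
  induction t generalizing i with
  | leaf =>
    obtain rfl : i = 0 := by simpa using hi
    simp [graft, size]
  | node l r ihl ihr =>
    rw [nl_node] at hi
    by_cases h : i < nl l
    · simp only [graft, if_pos h, size, ihl h]; omega
    · simp only [graft, if_neg h, size, ihr (show i - nl l < nl r by omega)]; omega

lemma nl_graft {t : BT} {i : ℕ} (u : BT) (hi : i < nl t) : nl (graft t i u) = nl t + size u := by
  rw [nl, nl, size_graft u hi, Nat.add_right_comm]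

lemma Rot.graft_left {s s' : BT} (h : Rot s s') (i : ℕ) (u : BT) :
    Rot (graft s i u) (graft s' i u) := by
  induction h generalizing i with
  | root a b c =>
    simp only [graft, nl_node, Nat.sub_add_eq]
    split_ifs <;> first | omega | exact .root _ _ _
  | congrL r hr ih =>
    simp only [graft, ← hr.nl_eq]
    split_ifs
    · exact .congrL r (ih i)
    · exact .congrL _ hr
  | congrR l hr ih =>
    simp only [graft]
    split_ifs
    · exact .congrR _ hr
    · exact .congrR l (ih _)

lemma Rot.graft_right {u v : BT} (h : Rot u v) {t : BT} {i : ℕ} (hi : i < nl t) :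
    Rot (graft t i u) (graft t i v) := by
  induction t generalizing i with
  | leaf =>
    obtain rfl : i = 0 := by simpa using hi
    exact h
  | node l r ihl ihr =>
    rw [nl_node] at hi
    simp only [graft]
    split_ifs with hl
    · exact .congrL r (ihl hl)
    · exact .congrR l (ihr (by omega))

open Classical in
/-- The tree spanned by the leaves whose numbers lie in `A`: the other leaves are deleted and
the nodes left with one child contracted; `none` if no leaf is numbered in `A`. -/
noncomputable def restrict (A : Set ℕ) : BT → Option BT
  | leaf => if 0 ∈ A then some leaf else none
  | node l r => (restrict A l).merge node (restrict ((· + nl l) ⁻¹' A) r)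

lemma restrict_eq_none_iff {A : Set ℕ} {t : BT} : restrict A t = none ↔ ∀ j < nl t, j ∉ A := by
  induction t generalizing A with
  | leaf => simp [restrict]
  | node l r ihl ihr =>
    simp only [restrict, Option.merge_eq_none_iff, ihl, ihr, Set.mem_preimage, nl_node]
    constructor
    · rintro ⟨hl, hr⟩ j hj
      by_cases h : j < nl l
      · exact hl j h
      · simpa [Nat.sub_add_cancel (not_lt.1 h)] using hr (j - nl l) (by omega)
    · intro h
      exact ⟨fun j hj => h j (by omega), fun j hj => h _ (by omega)⟩

lemma restrict_eq_self {A : Set ℕ} {t : BT} (h : ∀ j < nl t, j ∈ A) : restrict A t = some t := by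
  induction t generalizing A with
  | leaf => simp [restrict, h 0 Nat.one_pos]
  | node l r ihl ihr =>
    rw [nl_node] at h
    rw [restrict, ihl fun j hj => h j (by omega),
      ihr (A := (· + nl l) ⁻¹' A) fun j hj => h (j + nl l) (by omega)]
    rfl

lemma restrict_eq_some_leaf {A : Set ℕ} {t : BT} (h₀ : 0 ∈ A)
    (h : ∀ j, 0 < j → j < nl t → j ∉ A) : restrict A t = some leaf := by
  induction t with
  | leaf => simp [restrict, h₀]
  | node l r ihl _ =>
    rw [nl_node] at h
    have hr : restrict ((· + nl l) ⁻¹' A) r = none :=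
      restrict_eq_none_iff.2 fun j hj => h (j + nl l) (by have := nl_pos l; omega) (by omega)
    rw [restrict, ihl fun j hj hjl => h j hj (by omega), hr]
    rfl

lemma preimage_add_preimage_add (A : Set ℕ) (a b : ℕ) :
    (· + b) ⁻¹' ((· + a) ⁻¹' A) = (· + (a + b)) ⁻¹' A := by
  ext; simp [Nat.add_assoc, Nat.add_comm b]

lemma Rot.restrict_eq_or_rot {u v : BT} (h : Rot u v) (A : Set ℕ) :
    restrict A u = restrict A v ∨
      ∃ x y, restrict A u = some x ∧ restrict A v = some y ∧ Rot x y := by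
  induction h generalizing A with
  | root a b c =>
    simp only [restrict, preimage_add_preimage_add, nl_node]
    rcases restrict A a with _ | x <;> rcases restrict _ b with _ | y <;>
      rcases restrict _ c with _ | z <;>
      first | exact .inl rfl | exact .inr ⟨_, _, rfl, rfl, .root x y z⟩
  | congrL r hr ih =>
    simp only [restrict, hr.nl_eq]
    rcases ih A with heq | ⟨x, y, hx, hy, hxy⟩
    · exact .inl (by rw [heq])
    · rw [hx, hy]
      rcases restrict _ r with _ | z
      · exact .inr ⟨x, y, rfl, rfl, hxy⟩
      · exact .inr ⟨node x z, node y z, rfl, rfl, .congrL z hxy⟩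
  | congrR l hr ih =>
    simp only [restrict]
    rcases ih ((· + nl l) ⁻¹' A) with heq | ⟨x, y, hx, hy, hxy⟩
    · exact .inl (by rw [heq])
    · rw [hx, hy]
      rcases restrict A l with _ | z
      · exact .inr ⟨x, y, rfl, rfl, hxy⟩
      · exact .inr ⟨node z x, node z y, rfl, rfl, .congrR z hxy⟩

lemma merge_node_assoc {x y z : Option BT} (h : x = none ∨ y = none ∨ z = none) :
    (x.merge node y).merge node z = x.merge node (y.merge node z) := by
  rcases h with rfl | rfl | rfl <;> simp

lemma Rot.restrict_eq_or_restrict_eq {u v : BT} (h : Rot u v) {A B : Set ℕ}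
    (hAB : ∀ j₁ j₂ j₃, j₁ < j₂ → j₂ < j₃ → j₁ ∈ A → j₃ ∈ A → j₂ ∉ B) :
    restrict A u = restrict A v ∨ restrict B u = restrict B v := by
  induction h generalizing A B with
  | root a b c =>
    simp only [restrict, preimage_add_preimage_add, nl_node]
    by_contra! hne
    have hA := mt merge_node_assoc hne.1
    have hB := mt merge_node_assoc hne.2
    simp only [restrict_eq_none_iff, not_or, not_forall, not_not, exists_prop] at hA hB
    obtain ⟨⟨j₁, hj₁, hA₁⟩, -, ⟨j₃, -, hA₃⟩⟩ := hA
    obtain ⟨-, ⟨j₂, hj₂, hB₂⟩, -⟩ := hB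
    exact hAB j₁ (j₂ + nl a) (j₃ + (nl a + nl b)) (by omega) (by omega) hA₁ hA₃ hB₂
  | congrL r hr ih =>
    simp only [restrict, hr.nl_eq]
    exact (ih hAB).imp (by rw [·]) (by rw [·])
  | congrR l hr ih =>
    simp only [restrict]
    refine (ih (A := (· + nl l) ⁻¹' A) (B := (· + nl l) ⁻¹' B)
      fun j₁ j₂ j₃ h₁₂ h₂₃ => hAB (j₁ + nl l) (j₂ + nl l) (j₃ + nl l) ?_ ?_).imp
      (by rw [·]) (by rw [·]) <;> omega

lemma Rot.getD_restrict_eq_or_rot {u v : BT} (h : Rot u v) (A : Set ℕ) :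
    (restrict A u).getD leaf = (restrict A v).getD leaf ∨
      Rot ((restrict A u).getD leaf) ((restrict A v).getD leaf) := by
  rcases h.restrict_eq_or_rot A with heq | ⟨x, y, hx, hy, hxy⟩
  · exact .inl (by rw [heq])
  · exact .inr (by rwa [hx, hy])

lemma Chain.exists_add_le_of_rot {P Q : BT → BT}
    (hP : ∀ {u v}, Rot u v → P u = P v ∨ Rot (P u) (P v))
    (hQ : ∀ {u v}, Rot u v → Q u = Q v ∨ Rot (Q u) (Q v))
    (hPQ : ∀ {u v}, Rot u v → P u = P v ∨ Q u = Q v) {n : ℕ} {u v : BT} (h : Chain n u v) :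
    ∃ a b, a + b ≤ n ∧ Chain a (P u) (P v) ∧ Chain b (Q u) (Q v) := by
  have move {F : BT → BT} (hF : ∀ {u v}, Rot u v → F u = F v ∨ Rot (F u) (F v)) {u v : BT}
      (h : Move u v) : F u = F v ∨ Move (F u) (F v) :=
    h.elim (fun h => (hF h).imp_right .inl) fun h => (hF h).imp Eq.symm .inr
  have move_eq {u v : BT} (h : Move u v) : P u = P v ∨ Q u = Q v :=
    h.elim hPQ fun h => (hPQ h).imp Eq.symm Eq.symm
  induction h with
  | refl => exact ⟨0, 0, le_rfl, .refl _, .refl _⟩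
  | step hm _ ih =>
    obtain ⟨a, b, hab, ha, hb⟩ := ih
    rcases move_eq hm with hPe | hQe
    · rw [hPe]
      rcases move hQ hm with hQe | hQm
      · exact ⟨a, b, by omega, ha, hQe ▸ hb⟩
      · exact ⟨a, b + 1, by omega, ha, .step hQm hb⟩
    · rw [hQe]
      rcases move hP hm with hPe | hPm
      · exact ⟨a, b, by omega, hPe ▸ ha, hb⟩
      · exact ⟨a + 1, b, by omega, .step hPm ha, hb⟩

lemma Chain.exists_add_le_restrict {A B : Set ℕ}
    (hAB : ∀ j₁ j₂ j₃, j₁ < j₂ → j₂ < j₃ → j₁ ∈ A → j₃ ∈ A → j₂ ∉ B)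
    {n : ℕ} {u v : BT} (h : Chain n u v) :
    ∃ a b, a + b ≤ n ∧ Chain a ((restrict A u).getD leaf) ((restrict A v).getD leaf) ∧
      Chain b ((restrict B u).getD leaf) ((restrict B v).getD leaf) :=
  h.exists_add_le_of_rot (·.getD_restrict_eq_or_rot A) (·.getD_restrict_eq_or_rot B)
    fun h => (h.restrict_eq_or_restrict_eq hAB).imp (congrArg (Option.getD · leaf))
      (congrArg (Option.getD · leaf))

lemma restrict_graft_Ico {t : BT} {i : ℕ} (u : BT) (hi : i < nl t) :
    restrict (Set.Ico i (i + nl u)) (graft t i u) = some u := by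
  induction t generalizing i with
  | leaf =>
    obtain rfl : i = 0 := by simpa using hi
    show restrict _ u = _
    exact restrict_eq_self fun j hj => by simpa using hj
  | node l r ihl ihr =>
    rw [nl_node] at hi
    by_cases hl : i < nl l
    · have hnl := nl_graft u hl
      have hu : nl u = size u + 1 := rfl
      have hr : restrict ((· + nl (graft l i u)) ⁻¹' Set.Ico i (i + nl u)) r = none :=
        restrict_eq_none_iff.2 fun j _ => by
          simp only [Set.mem_preimage, Set.mem_Ico]; omega
      simp only [graft, if_pos hl, restrict, ihl hl, hr]; rfl
    · have hl' : restrict (Set.Ico i (i + nl u)) l = none :=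
        restrict_eq_none_iff.2 fun j hj => by simp only [Set.mem_Ico]; omega
      have hshift : (· + nl l) ⁻¹' Set.Ico i (i + nl u) =
          Set.Ico (i - nl l) (i - nl l + nl u) := by
        ext j; simp only [Set.mem_preimage, Set.mem_Ico]; omega
      simp only [graft, if_neg hl, restrict, hl', hshift, ihr (show i - nl l < nl r by omega)]; rfl

lemma restrict_graft_compl_Ioo {t : BT} {i : ℕ} (u : BT) (hi : i < nl t) :
    restrict (Set.Ioo i (i + nl u))ᶜ (graft t i u) = some t := by
  induction t generalizing i with
  | leaf =>
    obtain rfl : i = 0 := by simpa using hi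
    show restrict _ u = _
    exact restrict_eq_some_leaf (by simp) fun j hj hju => by
      simp only [Set.mem_compl_iff, Set.mem_Ioo]; omega
  | node l r ihl ihr =>
    rw [nl_node] at hi
    by_cases hl : i < nl l
    · have hnl := nl_graft u hl
      have hu : nl u = size u + 1 := rfl
      have hr : restrict ((· + nl (graft l i u)) ⁻¹' (Set.Ioo i (i + nl u))ᶜ) r = some r :=
        restrict_eq_self fun j _ => by
          simp only [Set.mem_preimage, Set.mem_compl_iff, Set.mem_Ioo]; omega
      simp only [graft, if_pos hl, restrict, ihl hl, hr]; rfl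
    · have hl' : restrict (Set.Ioo i (i + nl u))ᶜ l = some l :=
        restrict_eq_self fun j hj => by simp only [Set.mem_compl_iff, Set.mem_Ioo]; omega
      have hshift : (· + nl l) ⁻¹' (Set.Ioo i (i + nl u))ᶜ =
          (Set.Ioo (i - nl l) (i - nl l + nl u))ᶜ := by
        ext j; simp only [Set.mem_preimage, Set.mem_compl_iff, Set.mem_Ioo]; omega
      simp only [graft, if_neg hl, restrict, hl', hshift, ihr (show i - nl l < nl r by omega)]; rfl

theorem splitting_lemma_general (S1 T1 S2 T2 : BT) (i : ℕ)
    (hsz1 : S1.size = T1.size) (hi : i < S1.nl) (hsz2 : S2.size = T2.size) :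
    dR (graft S1 i S2) (graft T1 i T2) = dR S1 T1 + dR S2 T2 := by
  have hiT : i < nl T1 := by rwa [nl, ← hsz1]
  have hnl : nl T2 = nl S2 := by rw [nl, nl, hsz2]
  apply le_antisymm
  · have lower := (chain_dR hsz2).map (Rot.graft_right · hi)
    have upper := (chain_dR hsz1).map (Rot.graft_left · i T2)
    exact (dR_le (lower.trans upper)).trans_eq (add_comm _ _)
  · have hsz : size (graft S1 i S2) = size (graft T1 i T2) := by
      rw [size_graft _ hi, size_graft _ hiT, hsz1, hsz2]
    obtain ⟨a, b, hab, hlower, hupper⟩ := (chain_dR hsz).exists_add_le_restrict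
      (A := Set.Ico i (i + nl S2)) (B := (Set.Ioo i (i + nl S2))ᶜ)
      fun j₁ j₂ j₃ h₁₂ h₂₃ h₁ h₃ => by
        simp only [Set.mem_Ico, Set.mem_Ioo, Set.mem_compl_iff] at h₁ h₃ ⊢; omega
    rw [restrict_graft_Ico _ hi, ← hnl, restrict_graft_Ico _ hiT, Option.getD_some,
      Option.getD_some] at hlower
    rw [restrict_graft_compl_Ioo _ hi, ← hnl, restrict_graft_compl_Ioo _ hiT,
      Option.getD_some, Option.getD_some] at hupper
    linarith [dR_le hlower, dR_le hupper]

theorem splitting_lemma (S1 T1 S2 T2 : BT) (i : ℕ)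
    (hsz1 : S1.size = T1.size) (hi : i < S1.nl) (hsz2 : S2.size = T2.size)
    (hS2 : S2 ≠ leaf) (hT2 : T2 ≠ leaf) :
    dR (graft S1 i S2) (graft T1 i T2) = dR S1 T1 + dR S2 T2 :=
  splitting_lemma_general S1 T1 S2 T2 i hsz1 hi hsz2

end BT
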